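/- arXiv:1612.04441 — 4 statements merged into one kernel-verified Lean document; each statement's English description precedes it below -/
import Mathlib

section
/- Let K be an algebraically closed field complete with respect to a non-trivial non-archimedean absolute value, f ∈ K(z) of degree d > 0, and F = (F₀,F₁) a minimal lift of f. Then for every p ∈ K² \ {0}, ‖F(p)‖ ≥ |Res(F)| · ‖p‖^d, where ‖(p₀,p₁)‖ = max{|p₀|,|p₁|}. -/
open Polynomial

/-- Dehomogenization `H(1, X)` of a binary form. -/
noncomputable def toUni {K : Type*} [CommRing K] (H : MvPolynomial (Fin 2) K) : Polynomial K :=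
  MvPolynomial.aeval ![(1 : Polynomial K), Polynomial.X] H

/-- The Sylvester matrix of a pair of binary forms of degree `d`, given through
their dehomogenizations. -/
noncomputable def sylv {K : Type*} [CommRing K] (d : ℕ) (F G : Polynomial K) :
    Matrix (Fin (d + d)) (Fin (d + d)) K := fun i j =>
  if (i : ℕ) < d then
    (if (i : ℕ) ≤ (j : ℕ) ∧ (j : ℕ) ≤ (i : ℕ) + d then
      F.coeff (d - ((j : ℕ) - (i : ℕ))) else 0)
  else
    (if (i : ℕ) - d ≤ (j : ℕ) ∧ (j : ℕ) ≤ ((i : ℕ) - d) + d then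
      G.coeff (d - ((j : ℕ) - ((i : ℕ) - d))) else 0)

/-- The homogeneous resultant of a pair of degree-`d` binary forms. -/
noncomputable def res2 {K : Type*} [CommRing K] (d : ℕ) (H₀ H₁ : MvPolynomial (Fin 2) K) : K :=
  (sylv d (toUni H₀) (toUni H₁)).det

/-- The degree of a rational function. -/
noncomputable def ratDeg {K : Type*} [Field K] (f : RatFunc K) : ℕ :=
  max f.num.natDegree f.denom.natDegree

/-- `H = (H₀,H₁)` is a (non-degenerate homogeneous polynomial) lift of degree `d`
of the rational function `f`: both components are homogeneous of degree `d`,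
the homogeneous resultant is nonzero, and `H₁(1,z)/H₀(1,z) = f(z)`. -/
noncomputable def IsLift {K : Type*} [Field K] (d : ℕ) (f : RatFunc K)
    (H : Fin 2 → MvPolynomial (Fin 2) K) : Prop :=
  (H 0).IsHomogeneous d ∧ (H 1).IsHomogeneous d ∧ res2 d (H 0) (H 1) ≠ 0 ∧
    f * algebraMap (Polynomial K) (RatFunc K) (toUni (H 0)) =
      algebraMap (Polynomial K) (RatFunc K) (toUni (H 1))

/-- The maximum of the absolute values of the coefficients of the pair `H`. -/
noncomputable def coeffSup {K : Type*} [Field K] (v : AbsoluteValue K ℝ)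
    (H : Fin 2 → MvPolynomial (Fin 2) K) : ℝ :=
  sSup {r : ℝ | ∃ i : Fin 2, ∃ n : Fin 2 →₀ ℕ, r = v (MvPolynomial.coeff n (H i))}

/-- Substitution `H ∘ A`, i.e. `p ↦ H (A p)`. -/
noncomputable def polyComp {K : Type*} [CommRing K] (A : Matrix (Fin 2) (Fin 2) K)
    (H : MvPolynomial (Fin 2) K) : MvPolynomial (Fin 2) K :=
  MvPolynomial.aeval (fun i => ∑ j, MvPolynomial.C (A i j) * MvPolynomial.X j) H

/-- The conjugated pair `A⁻¹ ∘ H ∘ A`. -/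
noncomputable def pairConj {K : Type*} [Field K] (A : Matrix (Fin 2) (Fin 2) K)
    (H : Fin 2 → MvPolynomial (Fin 2) K) : Fin 2 → MvPolynomial (Fin 2) K :=
  fun i => ∑ j, MvPolynomial.C (A⁻¹ i j) * polyComp A (H j)


section stmtNineAux

private lemma stmt9_vsum_le {K : Type*} [Field K] (v : AbsoluteValue K ℝ)
    (hna : ∀ x y : K, v (x + y) ≤ max (v x) (v y))
    {ι : Type*} (s : Finset ι) (g : ι → K) {C : ℝ} (hC : 0 ≤ C)
    (h : ∀ j ∈ s, v (g j) ≤ C) : v (∑ j ∈ s, g j) ≤ C := by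
  classical
  induction s using Finset.cons_induction with
  | empty => simpa using hC
  | cons a s ha ih =>
    rw [Finset.sum_cons]
    exact le_trans (hna _ _) (max_le (h a (Finset.mem_cons_self a s))
      (ih fun j hj => h j (Finset.mem_cons_of_mem hj)))

private lemma stmt9_vdet_le {K : Type*} [Field K] (v : AbsoluteValue K ℝ)
    (hna : ∀ x y : K, v (x + y) ≤ max (v x) (v y))
    {n : ℕ} (M : Matrix (Fin n) (Fin n) K)
    (h : ∀ i j, v (M i j) ≤ 1) : v M.det ≤ 1 := by
  rw [Matrix.det_apply]
  refine stmt9_vsum_le v hna _ _ zero_le_one fun σ _ => ?_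
  rcases Int.units_eq_one_or σ.sign with hs | hs <;>
    · simp only [hs, Units.smul_def, one_smul, Units.val_neg, Units.val_one, neg_smul,
        one_smul, v.map_neg]
      rw [map_prod]
      exact Finset.prod_le_one (fun i _ => v.nonneg _) (fun i _ => h _ _)

private lemma stmt9_det_bound {K : Type*} [Field K] (v : AbsoluteValue K ℝ)
    (hna : ∀ x y : K, v (x + y) ≤ max (v x) (v y))
    {n : ℕ} (S : Matrix (Fin n) (Fin n) K) (m : Fin n) (wv : Fin n → K)
    (hw : wv m = 1) (hS : ∀ i j, v (S i j) ≤ 1) {C : ℝ} (hC : 0 ≤ C)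
    (h : ∀ j, v (S.mulVec wv j) ≤ C) : v S.det ≤ C := by
  have hadj : ∀ i j, v (S.adjugate i j) ≤ 1 := by
    intro i j
    rw [Matrix.adjugate_apply]
    refine stmt9_vdet_le v hna _ fun i' j' => ?_
    rw [Matrix.updateRow_apply]
    split
    · by_cases hj' : j' = i <;> simp [Pi.single_apply, hj', hS]
    · exact hS i' j'
  have hid : S.adjugate.mulVec (S.mulVec wv) = S.det • wv := by
    rw [Matrix.mulVec_mulVec, Matrix.adjugate_mul, Matrix.smul_mulVec,
      Matrix.one_mulVec]
  have hm : S.det = ∑ j, S.adjugate m j * S.mulVec wv j := by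
    have h2 := congrFun hid m
    rw [Matrix.mulVec, dotProduct] at h2
    rw [h2]
    simp [hw]
  rw [hm]
  refine stmt9_vsum_le v hna _ _ hC fun j _ => ?_
  rw [map_mul]
  calc v (S.adjugate m j) * v (S.mulVec wv j) ≤ 1 * C :=
        mul_le_mul (hadj m j) (h j) (v.nonneg _) zero_le_one
    _ = C := one_mul C

private lemma stmt9_toUni_coeff {R : Type*} [CommRing R] (H : MvPolynomial (Fin 2) R) (m : ℕ) :
    (toUni H).coeff m = ∑ n ∈ H.support, if n 1 = m then MvPolynomial.coeff n H else 0 := by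
  rw [toUni, MvPolynomial.aeval_def, MvPolynomial.eval₂_eq', Polynomial.finset_sum_coeff]
  refine Finset.sum_congr rfl fun n _ => ?_
  rw [Fin.prod_univ_two]
  simp [Polynomial.coeff_X_pow, eq_comm, Polynomial.algebraMap_eq]

private lemma stmt9_eval_isHomogeneous {R : Type*} [CommRing R] {d : ℕ}
    {H : MvPolynomial (Fin 2) R} (h : H.IsHomogeneous d) (p : Fin 2 → R) :
    MvPolynomial.eval p H =
      ∑ k ∈ Finset.range (d + 1), (toUni H).coeff k * p 0 ^ (d - k) * p 1 ^ k := by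
  have hsum : ∀ n ∈ H.support, n 0 + n 1 = d := by
    intro n hn
    have h2 := h (MvPolynomial.mem_support_iff.mp hn)
    rw [← h2, Finsupp.weight_apply, Finsupp.sum_fintype _ _ (by simp), Fin.sum_univ_two]
    simp
  simp only [stmt9_toUni_coeff, Finset.sum_mul]
  rw [Finset.sum_comm, MvPolynomial.eval_eq']
  refine Finset.sum_congr rfl fun n hn => Eq.symm ?_
  have hd : n 0 + n 1 = d := hsum n hn
  have hmem : n 1 ∈ Finset.range (d + 1) := Finset.mem_range.mpr (by omega)
  rw [Fin.prod_univ_two]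
  calc ∑ k ∈ Finset.range (d + 1),
        (if n 1 = k then MvPolynomial.coeff n H else 0) * p 0 ^ (d - k) * p 1 ^ k
      = ∑ k ∈ Finset.range (d + 1),
        (if n 1 = k then MvPolynomial.coeff n H * p 0 ^ (d - k) * p 1 ^ k else 0) := by
        refine Finset.sum_congr rfl fun k _ => ?_
        split <;> simp
    _ = MvPolynomial.coeff n H * p 0 ^ (d - n 1) * p 1 ^ (n 1) := by
        rw [Finset.sum_ite_eq, if_pos hmem]
    _ = MvPolynomial.coeff n H * (p 0 ^ n 0 * p 1 ^ n 1) := by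
        have h0 : d - n 1 = n 0 := by omega
        rw [mul_assoc, h0]

private lemma stmt9_sylv_mulVec {K : Type*} [CommRing K] (d : ℕ) (F G : Polynomial K)
    (w : ℕ → K) (i : Fin (d + d)) :
    (sylv d F G).mulVec (fun j => w (j : ℕ)) i =
      if (i : ℕ) < d then
        ∑ k ∈ Finset.range (d + 1), F.coeff (d - k) * w ((i : ℕ) + k)
      else
        ∑ k ∈ Finset.range (d + 1), G.coeff (d - k) * w (((i : ℕ) - d) + k) := by
  have key : ∀ (P : Polynomial K) (m : ℕ), m + d < d + d →
      (∑ j ∈ Finset.range (d + d),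
        (if m ≤ j ∧ j ≤ m + d then P.coeff (d - (j - m)) else 0) * w j) =
      ∑ k ∈ Finset.range (d + 1), P.coeff (d - k) * w (m + k) := by
    intro P m hm
    rw [show (∑ j ∈ Finset.range (d + d),
        (if m ≤ j ∧ j ≤ m + d then P.coeff (d - (j - m)) else 0) * w j) =
        ∑ j ∈ Finset.range (d + d),
        (if m ≤ j ∧ j ≤ m + d then P.coeff (d - (j - m)) * w j else 0) from
      Finset.sum_congr rfl fun j _ => by split <;> simp]
    rw [← Finset.sum_filter]
    have hfil : (Finset.range (d + d)).filter (fun j => m ≤ j ∧ j ≤ m + d) =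
        Finset.Icc m (m + d) := by
      ext j
      simp only [Finset.mem_filter, Finset.mem_range, Finset.mem_Icc]
      omega
    rw [hfil, ← Finset.Ico_add_one_right_eq_Icc, Finset.sum_Ico_eq_sum_range]
    have h1 : m + d + 1 - m = d + 1 := by omega
    rw [h1]
    refine Finset.sum_congr rfl fun k _ => ?_
    congr 2
    omega
  rw [Matrix.mulVec, dotProduct]
  by_cases hi : (i : ℕ) < d
  · rw [if_pos hi]
    have h2 := key F (i : ℕ) (by omega)
    rw [← h2, ← Fin.sum_univ_eq_sum_range
      (fun j => (if (i:ℕ) ≤ j ∧ j ≤ (i:ℕ) + d then F.coeff (d - (j - (i:ℕ))) else 0) * w j)]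
    refine Finset.sum_congr rfl fun j _ => ?_
    simp only [sylv, if_pos hi]
  · rw [if_neg hi]
    have h2 := key G ((i : ℕ) - d) (by omega)
    rw [← h2, ← Fin.sum_univ_eq_sum_range
      (fun j => (if (i:ℕ) - d ≤ j ∧ j ≤ ((i:ℕ) - d) + d then G.coeff (d - (j - ((i:ℕ) - d))) else 0) * w j)]
    refine Finset.sum_congr rfl fun j _ => ?_
    simp only [sylv, if_neg hi]

end stmtNineAux

/-- If `F` is a minimal lift of a rational function `f` of degree `d > 0`, then for
every `p ∈ K² \ {0}` one has `‖F(p)‖ ≥ |Res(F)| · ‖p‖^d` for the max-norm. -/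

theorem stmt_9 {K : Type*} [Field K] [IsAlgClosed K] (v : AbsoluteValue K ℝ)
    (hna : ∀ x y : K, v (x + y) ≤ max (v x) (v y))
    (hnt : ∃ x : K, x ≠ 0 ∧ v x ≠ 1)
    (hcomp : ∀ s : ℕ → K,
      (∀ ε : ℝ, 0 < ε → ∃ N, ∀ m ≥ N, ∀ n ≥ N, v (s m - s n) < ε) →
      ∃ L : K, ∀ ε : ℝ, 0 < ε → ∃ N, ∀ n ≥ N, v (s n - L) < ε)
    (f : RatFunc K) (hd : 0 < ratDeg f)
    (F : Fin 2 → MvPolynomial (Fin 2) K)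
    (hF : IsLift (ratDeg f) f F) (hmin : coeffSup v F = 1) :
    ∀ p : Fin 2 → K, p ≠ 0 →
      v (res2 (ratDeg f) (F 0) (F 1)) * (max (v (p 0)) (v (p 1))) ^ (ratDeg f) ≤
        max (v (MvPolynomial.eval p (F 0))) (v (MvPolynomial.eval p (F 1))) := by
  classical
  intro p hp
  obtain ⟨h0, h1, -, -⟩ := hF
  set d := ratDeg f with hdd
  -- every coefficient of F has absolute value at most 1
  have hbdd : BddAbove {r : ℝ | ∃ i : Fin 2, ∃ n : Fin 2 →₀ ℕ,
      r = v (MvPolynomial.coeff n (F i))} := by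
    refine BddAbove.mono ?_ ((Set.Finite.insert (0:ℝ)
      ((Finset.image (fun x : Fin 2 × (Fin 2 →₀ ℕ) => v (MvPolynomial.coeff x.2 (F x.1)))
        (Finset.univ ×ˢ ((F 0).support ∪ (F 1).support))).finite_toSet)).bddAbove)
    rintro r ⟨i, n, rfl⟩
    by_cases hn : n ∈ (F i).support
    · refine Set.mem_insert_of_mem _ ?_
      simp only [Finset.coe_image, Set.mem_image, Finset.mem_coe]
      refine ⟨(i, n), ?_, rfl⟩
      simp only [Finset.mem_product, Finset.mem_univ, true_and, Finset.mem_union]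
      fin_cases i
      · exact Or.inl hn
      · exact Or.inr hn
    · rw [MvPolynomial.notMem_support_iff.mp hn]
      simp
  have hcoeff : ∀ (i : Fin 2) (n : Fin 2 →₀ ℕ), v (MvPolynomial.coeff n (F i)) ≤ 1 := by
    intro i n
    rw [← hmin]
    exact le_csSup hbdd ⟨i, n, rfl⟩
  have hcu : ∀ (i : Fin 2) (m : ℕ), v ((toUni (F i)).coeff m) ≤ 1 := by
    intro i m
    rw [stmt9_toUni_coeff]
    refine stmt9_vsum_le v hna _ _ zero_le_one fun n _ => ?_
    split
    · exact hcoeff i n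
    · simp
  set a := toUni (F 0) with ha
  set b := toUni (F 1) with hb
  set S := sylv d a b with hSdef
  have hRes : res2 d (F 0) (F 1) = S.det := rfl
  have hSle : ∀ i j, v (S i j) ≤ 1 := by
    intro i j
    rw [hSdef]
    unfold sylv
    split
    · split
      · exact hcu 0 _
      · simp
    · split
      · exact hcu 1 _
      · simp
  set e0 := MvPolynomial.eval p (F 0) with he0
  set e1 := MvPolynomial.eval p (F 1) with he1
  set C0 := max (v e0) (v e1) with hC0
  have hC0nn : 0 ≤ C0 := le_trans (v.nonneg e0) (le_max_left _ _)
  have hE0 := stmt9_eval_isHomogeneous h0 p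
  have hE1 := stmt9_eval_isHomogeneous h1 p
  rw [hRes]
  rcases le_total (v (p 1)) (v (p 0)) with hle | hle
  · -- case ‖p‖ = |p 0|
    have hp0 : p 0 ≠ 0 := by
      intro h00
      apply hp
      funext i
      fin_cases i
      · exact h00
      · have hz1 : v (p 1) = 0 := le_antisymm (by simpa [h00] using hle) (v.nonneg _)
        exact v.eq_zero.mp hz1
    have hv0 : v (p 0) ≠ 0 := fun h => hp0 (v.eq_zero.mp h)
    set z := p 1 * (p 0)⁻¹ with hzdef
    have hz : v z ≤ 1 := by
      rw [hzdef, map_mul, map_inv₀]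
      calc v (p 1) * (v (p 0))⁻¹ ≤ v (p 0) * (v (p 0))⁻¹ :=
            mul_le_mul_of_nonneg_right hle (inv_nonneg.mpr (v.nonneg _))
        _ = 1 := mul_inv_cancel₀ hv0
    have hpow : ∀ t, t ≤ d → z ^ t * p 0 ^ d = p 1 ^ t * p 0 ^ (d - t) := by
      intro t ht
      have hsplit : p 0 ^ d = p 0 ^ t * p 0 ^ (d - t) := by
        rw [← pow_add]
        congr 1
        omega
      rw [hzdef, mul_pow, hsplit]
      field_simp
      rw [mul_assoc, ← mul_pow, one_div_mul_cancel hp0, one_pow, mul_one]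
    have hrow : ∀ j : Fin (d + d),
        p 0 ^ d * (S.mulVec (fun j => z ^ (d + d - 1 - (j : ℕ))) j) =
          z ^ (d - 1 - (if (j:ℕ) < d then (j:ℕ) else (j:ℕ) - d)) *
          (if (j:ℕ) < d then e0 else e1) := by
      intro j
      rw [hSdef]
      rw [show (fun j : Fin (d + d) => z ^ (d + d - 1 - (j : ℕ))) =
          (fun j : Fin (d + d) => (fun t : ℕ => z ^ (d + d - 1 - t)) (j : ℕ)) from rfl,
        stmt9_sylv_mulVec d a b (fun t : ℕ => z ^ (d + d - 1 - t)) j]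
      by_cases hj : (j:ℕ) < d
      · rw [if_pos hj, if_pos hj, if_pos hj]
        have hgen : ∀ (P : Polynomial K) (E : K),
            E = ∑ k ∈ Finset.range (d + 1), P.coeff k * p 0 ^ (d - k) * p 1 ^ k →
            ∀ m : ℕ, m ≤ d - 1 →
            p 0 ^ d * ∑ k ∈ Finset.range (d + 1),
              P.coeff (d - k) * (fun t : ℕ => z ^ (d + d - 1 - t)) (m + k) =
              z ^ (d - 1 - m) * E := by
          intro P E hE m hm
          calc p 0 ^ d * ∑ k ∈ Finset.range (d + 1),
                P.coeff (d - k) * (fun t : ℕ => z ^ (d + d - 1 - t)) (m + k)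
              = ∑ k ∈ Finset.range (d + 1),
                z ^ (d - 1 - m) * (P.coeff (d - k) * (z ^ (d - k) * p 0 ^ d)) := by
                rw [Finset.mul_sum]
                refine Finset.sum_congr rfl fun k hk => ?_
                have hk' : k ≤ d := by
                  have := Finset.mem_range.mp hk
                  omega
                have hd1 : 0 < d := hd
                have he : d + d - 1 - (m + k) = (d - 1 - m) + (d - k) := by omega
                simp only []
                rw [he, pow_add]
                ring
            _ = z ^ (d - 1 - m) * ∑ k ∈ Finset.range (d + 1),
                P.coeff (d - k) * (z ^ (d - k) * p 0 ^ d) := by rw [← Finset.mul_sum]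
            _ = z ^ (d - 1 - m) * E := by
                congr 1
                have hr := Finset.sum_range_reflect
                  (fun t => P.coeff t * (z ^ t * p 0 ^ d)) (d + 1)
                simp only [Nat.add_sub_cancel] at hr
                rw [hr, hE]
                refine Finset.sum_congr rfl fun k hk => ?_
                have hk' : k ≤ d := by
                  have := Finset.mem_range.mp hk
                  omega
                rw [hpow k hk']
                ring
        exact hgen a e0 hE0 (j : ℕ) (by omega)
      · rw [if_neg hj, if_neg hj, if_neg hj]
        have hgen : ∀ (P : Polynomial K) (E : K),
            E = ∑ k ∈ Finset.range (d + 1), P.coeff k * p 0 ^ (d - k) * p 1 ^ k →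
            ∀ m : ℕ, m ≤ d - 1 →
            p 0 ^ d * ∑ k ∈ Finset.range (d + 1),
              P.coeff (d - k) * (fun t : ℕ => z ^ (d + d - 1 - t)) (m + k) =
              z ^ (d - 1 - m) * E := by
          intro P E hE m hm
          calc p 0 ^ d * ∑ k ∈ Finset.range (d + 1),
                P.coeff (d - k) * (fun t : ℕ => z ^ (d + d - 1 - t)) (m + k)
              = ∑ k ∈ Finset.range (d + 1),
                z ^ (d - 1 - m) * (P.coeff (d - k) * (z ^ (d - k) * p 0 ^ d)) := by
                rw [Finset.mul_sum]
                refine Finset.sum_congr rfl fun k hk => ?_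
                have hk' : k ≤ d := by
                  have := Finset.mem_range.mp hk
                  omega
                have hd1 : 0 < d := hd
                have he : d + d - 1 - (m + k) = (d - 1 - m) + (d - k) := by omega
                simp only []
                rw [he, pow_add]
                ring
            _ = z ^ (d - 1 - m) * ∑ k ∈ Finset.range (d + 1),
                P.coeff (d - k) * (z ^ (d - k) * p 0 ^ d) := by rw [← Finset.mul_sum]
            _ = z ^ (d - 1 - m) * E := by
                congr 1
                have hr := Finset.sum_range_reflect
                  (fun t => P.coeff t * (z ^ t * p 0 ^ d)) (d + 1)
                simp only [Nat.add_sub_cancel] at hr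
                rw [hr, hE]
                refine Finset.sum_congr rfl fun k hk => ?_
                have hk' : k ≤ d := by
                  have := Finset.mem_range.mp hk
                  omega
                rw [hpow k hk']
                ring
        have hjd : (j : ℕ) - d ≤ d - 1 := by
          have := j.isLt
          omega
        exact hgen b e1 hE1 ((j : ℕ) - d) hjd
    have hvrow : ∀ j : Fin (d + d),
        v (S.mulVec (fun j => z ^ (d + d - 1 - (j : ℕ))) j) ≤ (v (p 0))⁻¹ ^ d * C0 := by
      intro j
      have h2 : S.mulVec (fun j => z ^ (d + d - 1 - (j : ℕ))) j =
          (p 0 ^ d)⁻¹ * (z ^ (d - 1 - (if (j:ℕ) < d then (j:ℕ) else (j:ℕ) - d)) *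
            (if (j:ℕ) < d then e0 else e1)) := by
        rw [← hrow j, inv_mul_cancel_left₀ (pow_ne_zero d hp0)]
      rw [h2, map_mul, map_inv₀, map_pow, map_mul, map_pow, ← inv_pow]
      refine mul_le_mul_of_nonneg_left ?_ (by positivity)
      calc v z ^ (d - 1 - (if (j:ℕ) < d then (j:ℕ) else (j:ℕ) - d)) *
            v (if (j:ℕ) < d then e0 else e1) ≤ 1 * C0 := by
            refine mul_le_mul (pow_le_one₀ (v.nonneg _) hz) ?_ (v.nonneg _) zero_le_one
            split
            · exact le_max_left _ _
            · exact le_max_right _ _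
        _ = C0 := one_mul _
    have hdet : v S.det ≤ (v (p 0))⁻¹ ^ d * C0 := by
      refine stmt9_det_bound v hna S ⟨d + d - 1, by omega⟩
        (fun j => z ^ (d + d - 1 - (j : ℕ))) ?_ hSle (by positivity) hvrow
      simp
    rw [max_eq_left hle]
    calc v S.det * v (p 0) ^ d ≤ ((v (p 0))⁻¹ ^ d * C0) * v (p 0) ^ d :=
          mul_le_mul_of_nonneg_right hdet (by positivity)
      _ = C0 := by
          rw [mul_right_comm, ← mul_pow, inv_mul_cancel₀ hv0, one_pow, one_mul]
  · -- case ‖p‖ = |p 1|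
    have hp1 : p 1 ≠ 0 := by
      intro h11
      apply hp
      funext i
      fin_cases i
      · have hz1 : v (p 0) = 0 := le_antisymm (by simpa [h11] using hle) (v.nonneg _)
        exact v.eq_zero.mp hz1
      · exact h11
    have hv1 : v (p 1) ≠ 0 := fun h => hp1 (v.eq_zero.mp h)
    set z := p 0 * (p 1)⁻¹ with hzdef
    have hz : v z ≤ 1 := by
      rw [hzdef, map_mul, map_inv₀]
      calc v (p 0) * (v (p 1))⁻¹ ≤ v (p 1) * (v (p 1))⁻¹ :=
            mul_le_mul_of_nonneg_right hle (inv_nonneg.mpr (v.nonneg _))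
        _ = 1 := mul_inv_cancel₀ hv1
    have hpow : ∀ t, t ≤ d → z ^ t * p 1 ^ d = p 0 ^ t * p 1 ^ (d - t) := by
      intro t ht
      have hsplit : p 1 ^ d = p 1 ^ t * p 1 ^ (d - t) := by
        rw [← pow_add]
        congr 1
        omega
      rw [hzdef, mul_pow, hsplit]
      field_simp
      rw [mul_assoc, ← mul_pow, one_div_mul_cancel hp1, one_pow, mul_one]
    have hrow : ∀ j : Fin (d + d),
        p 1 ^ d * (S.mulVec (fun j => z ^ (j : ℕ)) j) =
          z ^ (if (j:ℕ) < d then (j:ℕ) else (j:ℕ) - d) *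
          (if (j:ℕ) < d then e0 else e1) := by
      intro j
      rw [hSdef]
      rw [show (fun j : Fin (d + d) => z ^ (j : ℕ)) =
          (fun j : Fin (d + d) => (fun t : ℕ => z ^ t) (j : ℕ)) from rfl,
        stmt9_sylv_mulVec d a b (fun t : ℕ => z ^ t) j]
      have hgen : ∀ (P : Polynomial K) (E : K),
          E = ∑ k ∈ Finset.range (d + 1), P.coeff k * p 0 ^ (d - k) * p 1 ^ k →
          ∀ m : ℕ,
          p 1 ^ d * ∑ k ∈ Finset.range (d + 1),
            P.coeff (d - k) * (fun t : ℕ => z ^ t) (m + k) =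
            z ^ m * E := by
        intro P E hE m
        calc p 1 ^ d * ∑ k ∈ Finset.range (d + 1),
              P.coeff (d - k) * (fun t : ℕ => z ^ t) (m + k)
            = ∑ k ∈ Finset.range (d + 1),
              z ^ m * (P.coeff (d - k) * (z ^ k * p 1 ^ d)) := by
              rw [Finset.mul_sum]
              refine Finset.sum_congr rfl fun k hk => ?_
              simp only []
              rw [pow_add]
              ring
          _ = z ^ m * ∑ k ∈ Finset.range (d + 1),
              P.coeff (d - k) * (z ^ k * p 1 ^ d) := by rw [← Finset.mul_sum]
          _ = z ^ m * E := by
              congr 1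
              calc ∑ k ∈ Finset.range (d + 1), P.coeff (d - k) * (z ^ k * p 1 ^ d)
                  = ∑ k ∈ Finset.range (d + 1),
                    (fun t => P.coeff t * (p 0 ^ (d - t) * p 1 ^ t)) (d - k) := by
                    refine Finset.sum_congr rfl fun k hk => ?_
                    have hk' : k ≤ d := by
                      have := Finset.mem_range.mp hk
                      omega
                    simp only []
                    rw [hpow k hk']
                    have hdk : d - (d - k) = k := by omega
                    rw [hdk]
                _ = ∑ k ∈ Finset.range (d + 1),
                    P.coeff k * (p 0 ^ (d - k) * p 1 ^ k) := by
                    have hr := Finset.sum_range_reflect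
                      (fun t => P.coeff t * (p 0 ^ (d - t) * p 1 ^ t)) (d + 1)
                    simp only [Nat.add_sub_cancel] at hr
                    exact hr
                _ = E := by
                    rw [hE]
                    refine Finset.sum_congr rfl fun k hk => ?_
                    ring
      by_cases hj : (j:ℕ) < d
      · rw [if_pos hj, if_pos hj, if_pos hj]
        exact hgen a e0 hE0 (j : ℕ)
      · rw [if_neg hj, if_neg hj, if_neg hj]
        exact hgen b e1 hE1 ((j : ℕ) - d)
    have hvrow : ∀ j : Fin (d + d),
        v (S.mulVec (fun j => z ^ (j : ℕ)) j) ≤ (v (p 1))⁻¹ ^ d * C0 := by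
      intro j
      have h2 : S.mulVec (fun j => z ^ (j : ℕ)) j =
          (p 1 ^ d)⁻¹ * (z ^ (if (j:ℕ) < d then (j:ℕ) else (j:ℕ) - d) *
            (if (j:ℕ) < d then e0 else e1)) := by
        rw [← hrow j, inv_mul_cancel_left₀ (pow_ne_zero d hp1)]
      rw [h2, map_mul, map_inv₀, map_pow, map_mul, map_pow, ← inv_pow]
      refine mul_le_mul_of_nonneg_left ?_ (by positivity)
      calc v z ^ (if (j:ℕ) < d then (j:ℕ) else (j:ℕ) - d) *
            v (if (j:ℕ) < d then e0 else e1) ≤ 1 * C0 := by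
            refine mul_le_mul (pow_le_one₀ (v.nonneg _) hz) ?_ (v.nonneg _) zero_le_one
            split
            · exact le_max_left _ _
            · exact le_max_right _ _
        _ = C0 := one_mul _
    have hdet : v S.det ≤ (v (p 1))⁻¹ ^ d * C0 := by
      refine stmt9_det_bound v hna S ⟨0, by omega⟩
        (fun j => z ^ (j : ℕ)) ?_ hSle (by positivity) hvrow
      simp
    rw [max_eq_right hle]
    calc v S.det * v (p 1) ^ d ≤ ((v (p 1))⁻¹ ^ d * C0) * v (p 1) ^ d :=
          mul_le_mul_of_nonneg_right hdet (by positivity)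
      _ = C0 := by
          rw [mul_right_comm, ← mul_pow, inv_mul_cancel₀ hv1, one_pow, one_mul]
end

section
/- Let K be a field, F₀, F₁ homogeneous polynomials of degree d in two variables over K, and α, β, γ, δ ∈ K. Then Res(α·F₀ + β·F₁, γ·F₀ + δ·F₁) = (αδ - βγ)^d · Res(F₀, F₁). -/
open Polynomial

/-!
The rows of the Sylvester matrix of `(G₀, G₁)` are the shifted coefficient rows of `G₀` and of
`G₁`, and a coefficient row depends linearly on its polynomial. Hence, with rows and columns
indexed by `Fin 2 × Fin d`, the Sylvester matrix of `(αF₀ + βF₁, γF₀ + δF₁)` is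
`(!![α, β; γ, δ] ⊗ₖ 1) * sylv d F₀ F₁`, and `det (A ⊗ₖ 1) = (det A) ^ d`.
-/

open Matrix Kronecker

section Sylvester

variable {R : Type*} [CommRing R]

lemma toUni_C_mul_add_C_mul (F G : MvPolynomial (Fin 2) R) (a b : R) :
    toUni (MvPolynomial.C a * F + MvPolynomial.C b * G) = C a * toUni F + C b * toUni G := by
  simp [toUni, Polynomial.algebraMap_eq]

noncomputable def coeffRow (d : ℕ) (f : R[X]) (k j : ℕ) : R :=
  if k ≤ j ∧ j ≤ k + d then f.coeff (d - (j - k)) else 0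

lemma coeffRow_C_mul_add_C_mul (d : ℕ) (f g : R[X]) (a b : R) (k j : ℕ) :
    coeffRow d (C a * f + C b * g) k j = a * coeffRow d f k j + b * coeffRow d g k j := by
  unfold coeffRow
  split_ifs <;> simp

/-- `Fin (d + d) ≃ Fin 2 × Fin d`, sending `i * d + k` to `(i, k)`. -/
def finAddSelfEquivProd (d : ℕ) : Fin (d + d) ≃ Fin 2 × Fin d :=
  (finCongr (two_mul d).symm).trans finProdFinEquiv.symm

lemma sylv_finAddSelfEquivProd_symm_zero (d : ℕ) (f g : R[X]) (k : Fin d) (j : Fin (d + d)) :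
    sylv d f g ((finAddSelfEquivProd d).symm (0, k)) j = coeffRow d f k j := by
  simp [sylv, coeffRow, finAddSelfEquivProd]

lemma sylv_finAddSelfEquivProd_symm_one (d : ℕ) (f g : R[X]) (k : Fin d) (j : Fin (d + d)) :
    sylv d f g ((finAddSelfEquivProd d).symm (1, k)) j = coeffRow d g k j := by
  simp [sylv, coeffRow, finAddSelfEquivProd]

lemma sylv_C_mul_add_C_mul (d : ℕ) (f g : R[X]) (α β γ δ : R) :
    (sylv d (C α * f + C β * g) (C γ * f + C δ * g)).submatrix
        (finAddSelfEquivProd d).symm (finAddSelfEquivProd d).symm =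
      (!![α, β; γ, δ] ⊗ₖ (1 : Matrix (Fin d) (Fin d) R)) *
        (sylv d f g).submatrix (finAddSelfEquivProd d).symm (finAddSelfEquivProd d).symm := by
  ext ⟨i, k⟩ q
  fin_cases i <;>
    simp [mul_apply, Fintype.sum_prod_type, one_apply, sylv_finAddSelfEquivProd_symm_zero,
      sylv_finAddSelfEquivProd_symm_one, coeffRow_C_mul_add_C_mul]

end Sylvester

theorem stmt_11_general {K : Type*} [Field K] (d : ℕ) (F₀ F₁ : MvPolynomial (Fin 2) K)
    (α β γ δ : K) :
    res2 d (MvPolynomial.C α * F₀ + MvPolynomial.C β * F₁)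
        (MvPolynomial.C γ * F₀ + MvPolynomial.C δ * F₁) =
      (α * δ - β * γ) ^ d * res2 d F₀ F₁ := by
  rw [res2, res2, toUni_C_mul_add_C_mul, toUni_C_mul_add_C_mul,
    ← det_submatrix_equiv_self (finAddSelfEquivProd d).symm, sylv_C_mul_add_C_mul, det_mul,
    det_kronecker, det_fin_two_of, det_one, one_pow, mul_one, Fintype.card_fin,
    det_submatrix_equiv_self]

/-- For degree-`d` binary forms `F₀, F₁` over a field `K` and `α, β, γ, δ ∈ K`:
`Res(α·F₀ + β·F₁, γ·F₀ + δ·F₁) = (αδ - βγ)^d · Res(F₀,F₁)`. -/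
theorem stmt_11 {K : Type*} [Field K] (d : ℕ) (F₀ F₁ : MvPolynomial (Fin 2) K)
    (h₀ : F₀.IsHomogeneous d) (h₁ : F₁.IsHomogeneous d) (α β γ δ : K) :
    res2 d (MvPolynomial.C α * F₀ + MvPolynomial.C β * F₁)
        (MvPolynomial.C γ * F₀ + MvPolynomial.C δ * F₁) =
      (α * δ - β * γ) ^ d * res2 d F₀ F₁ :=
  stmt_11_general d F₀ F₁ α β γ δ
end

section
/- Let (T, ρ) be a finite metric tree and φ: T → ℝ a continuous, piecewise affine, convex function such that the directional derivative of φ is nonzero in every direction at every point of T (i.e., φ has no direction of zero slope). Then φ attains its minimum at a unique point of T. -/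
/-!
Existence is compactness. For uniqueness, a convex function along the geodesic joining two
minimizers is bounded by its endpoint values, so it is constant on that segment; this
contradicts the nonzero slope of `φ` at the start of the segment.
-/

/-- `γ` is an arc-length geodesic segment from `a` to `b`. -/
def IsGeodesicSeg {T : Type*} [MetricSpace T] (a b : T) (γ : ℝ → T) : Prop :=
  γ 0 = a ∧ γ (dist a b) = b ∧
    ∀ s ∈ Set.Icc (0 : ℝ) (dist a b), ∀ t ∈ Set.Icc (0 : ℝ) (dist a b),
      dist (γ s) (γ t) = |s - t|

/-- A finite metric tree: a compact, uniquely geodesic metric space which is the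
union of finitely many geodesic segments (spanned by finitely many points). -/
def IsFinMetricTree (T : Type*) [MetricSpace T] : Prop :=
  CompactSpace T ∧
  (∀ a b : T, ∃ γ : ℝ → T, IsGeodesicSeg a b γ) ∧
  (∀ a b : T, ∀ γ₁ γ₂ : ℝ → T, IsGeodesicSeg a b γ₁ → IsGeodesicSeg a b γ₂ →
    Set.EqOn γ₁ γ₂ (Set.Icc 0 (dist a b))) ∧
  (∃ S : Finset T, ∀ x : T, ∃ a ∈ S, ∃ b ∈ S, ∃ γ : ℝ → T,
    IsGeodesicSeg a b γ ∧ x ∈ γ '' Set.Icc 0 (dist a b))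

theorem IsGeodesicSeg.apply_eq_of_convexOn_of_isMin {T : Type*} [MetricSpace T]
    {φ : T → ℝ} {a b : T} {γ : ℝ → T} (hγ : IsGeodesicSeg a b γ)
    (hconv : ConvexOn ℝ (Set.Icc 0 (dist a b)) (φ ∘ γ)) (ha : ∀ y, φ a ≤ φ y) (hb : φ b ≤ φ a) :
    ∀ t ∈ Set.Icc 0 (dist a b), φ (γ t) = φ a := by
  intro t ht
  have hmax := hconv.le_max_of_mem_Icc (Set.left_mem_Icc.2 dist_nonneg)
    (Set.right_mem_Icc.2 dist_nonneg) ht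
  simp only [Function.comp_apply, hγ.1, hγ.2.1, max_eq_left hb] at hmax
  exact le_antisymm hmax (ha _)

/-- A continuous, piecewise affine, convex function on a finite metric tree whose
directional derivative is nonzero in every direction at every point attains its
minimum at a unique point. -/
theorem stmt_15 {T : Type*} [MetricSpace T] [Nonempty T] (hT : IsFinMetricTree T)
    (φ : T → ℝ) (hc : Continuous φ)
    (hconv : ∀ (a b : T) (γ : ℝ → T), IsGeodesicSeg a b γ →
      ConvexOn ℝ (Set.Icc 0 (dist a b)) (φ ∘ γ))
    (haff : ∀ (a b : T) (γ : ℝ → T), IsGeodesicSeg a b γ → a ≠ b →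
      ∃ ε > (0 : ℝ), ∃ c : ℝ, c ≠ 0 ∧
        ∀ t ∈ Set.Icc (0 : ℝ) (min ε (dist a b)), φ (γ t) = φ a + c * t) :
    ∃! x : T, ∀ y : T, φ x ≤ φ y := by
  obtain ⟨hcompact, hgeod, -, -⟩ := hT
  obtain ⟨x, -, hx⟩ := isCompact_univ.exists_isMinOn Set.univ_nonempty hc.continuousOn
  have hxmin : ∀ y, φ x ≤ φ y := fun y => hx (Set.mem_univ y)
  refine ⟨x, hxmin, fun y hymin => ?_⟩
  by_contra hne
  obtain ⟨γ, hγ⟩ := hgeod y x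
  obtain ⟨ε, hε, c, hc0, hslope⟩ := haff y x γ hγ hne
  have hflat := hγ.apply_eq_of_convexOn_of_isMin (hconv y x γ hγ) hymin (hxmin y)
  set t := min ε (dist y x)
  have ht : 0 < t := lt_min hε (dist_pos.2 hne)
  have hct : c * t = 0 := by
    linarith [hslope t ⟨ht.le, le_rfl⟩, hflat t ⟨ht.le, min_le_right _ _⟩]
  exact hc0 ((mul_eq_zero.1 hct).resolve_right ht.ne')
end

section
/- Let K be an algebraically closed field complete with respect to a non-trivial non-archimedean absolute value with residue field k, and let h ∈ K(z) have degree d > 0 and a ∈ P^1(K). Let H = (H₀,H₁) be a minimal lift of h and p ∈ K² a representative of a with ‖p‖ = 1. If ‖H(p)‖ = 1, then the reduction of h(a) modulo the maximal ideal equals the point of P^1(k) represented by (H̃₀(p̃), H̃₁(p̃)), where tilde denotes reduction of coordinates and coefficients modulo the maximal ideal m_K. -/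
/-- The ring of integers `O_K = {x : |x| ≤ 1}` of a non-archimedean valued field. -/
def intRing {K : Type*} [Field K] (v : AbsoluteValue K ℝ)
    (hna : ∀ x y : K, v (x + y) ≤ max (v x) (v y)) : Subring K where
  carrier := {x : K | v x ≤ 1}
  mul_mem' := by
    intro a b ha hb
    simp only [Set.mem_setOf_eq, map_mul] at *
    calc v a * v b ≤ 1 * 1 := mul_le_mul ha hb (v.nonneg b) zero_le_one
      _ = 1 := one_mul 1
  one_mem' := by simp [Set.mem_setOf_eq]
  add_mem' := by
    intro a b ha hb
    exact le_trans (hna a b) (max_le ha hb)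
  zero_mem' := by simp [Set.mem_setOf_eq]
  neg_mem' := by
    intro a ha
    show v (-a) ≤ 1
    rw [v.map_neg]
    exact ha

/-- The maximal ideal `m_K = {x : |x| < 1}` of `O_K`. -/
def maxIdeal {K : Type*} [Field K] (v : AbsoluteValue K ℝ)
    (hna : ∀ x y : K, v (x + y) ≤ max (v x) (v y)) : Ideal (intRing v hna) where
  carrier := {x : intRing v hna | v (x : K) < 1}
  add_mem' := by
    intro a b ha hb
    exact lt_of_le_of_lt (hna (a : K) (b : K)) (max_lt ha hb)
  zero_mem' := by simp [Set.mem_setOf_eq]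
  smul_mem' := by
    intro c x hx
    simp only [Set.mem_setOf_eq, smul_eq_mul] at *
    calc v ((c : K) * (x : K)) = v (c : K) * v (x : K) := map_mul v _ _
      _ ≤ 1 * v (x : K) := mul_le_mul_of_nonneg_right c.2 (v.nonneg _)
      _ = v (x : K) := one_mul _
      _ < 1 := hx

section IntRing

variable {K : Type*} [Field K] {v : AbsoluteValue K ℝ}
  {hna : ∀ x y : K, v (x + y) ≤ max (v x) (v y)}

theorem mk_maxIdeal_ne_zero_iff (x : intRing v hna) :
    Ideal.Quotient.mk (maxIdeal v hna) x ≠ 0 ↔ v (x : K) = 1 := by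
  rw [ne_eq, Ideal.Quotient.eq_zero_iff_mem]
  exact ⟨fun hx => le_antisymm x.2 (not_lt.mp hx), fun hx hlt => (hlt : v (x : K) < 1).ne hx⟩

/-- The scalar `c` is forced to have absolute value `1`, so it is a unit of `O_K`. -/
theorem exists_mk_eq_mul_of_coe_eq_mul {q y : Fin 2 → intRing v hna} {c : K}
    (hq : max (v (q 0 : K)) (v (q 1 : K)) = 1) (hy : max (v (y 0 : K)) (v (y 1 : K)) = 1)
    (hqy : ∀ i, (q i : K) = c * y i) :
    ∃ u : intRing v hna ⧸ maxIdeal v hna, u ≠ 0 ∧ ∀ i,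
      Ideal.Quotient.mk (maxIdeal v hna) (q i) = u * Ideal.Quotient.mk (maxIdeal v hna) (y i) := by
  have hc : v c = 1 := by
    rwa [hqy 0, hqy 1, map_mul, map_mul, ← mul_max_of_nonneg _ _ (v.nonneg c), hy, mul_one] at hq
  let u : intRing v hna := ⟨c, hc.le⟩
  refine ⟨Ideal.Quotient.mk _ u, (mk_maxIdeal_ne_zero_iff u).mpr hc, fun i => ?_⟩
  rw [← map_mul]
  exact congrArg _ (Subtype.ext (hqy i))

end IntRing

theorem stmt_19_general {K : Type*} [Field K] (v : AbsoluteValue K ℝ)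
    (hna : ∀ x y : K, v (x + y) ≤ max (v x) (v y))
    (H : Fin 2 → MvPolynomial (Fin 2) (intRing v hna))
    (p : Fin 2 → intRing v hna)
    (hHp : max
        (v (MvPolynomial.eval (fun j => (p j : K))
          (MvPolynomial.map (intRing v hna).subtype (H 0))))
        (v (MvPolynomial.eval (fun j => (p j : K))
          (MvPolynomial.map (intRing v hna).subtype (H 1)))) = 1)
    (q : Fin 2 → intRing v hna)
    (hq : max (v (q 0 : K)) (v (q 1 : K)) = 1)
    (hrep : ∃ c : K, c ≠ 0 ∧ ∀ i, (q i : K) =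
      c * MvPolynomial.eval (fun j => (p j : K))
        (MvPolynomial.map (intRing v hna).subtype (H i))) :
    ∃ c : (intRing v hna) ⧸ (maxIdeal v hna), c ≠ 0 ∧ ∀ i,
      Ideal.Quotient.mk (maxIdeal v hna) (q i) =
        c * MvPolynomial.eval (fun j => Ideal.Quotient.mk (maxIdeal v hna) (p j))
          (MvPolynomial.map (Ideal.Quotient.mk (maxIdeal v hna)) (H i)) := by
  obtain ⟨c, -, hc⟩ := hrep
  have hcoe : ∀ i, ((MvPolynomial.eval p (H i) : intRing v hna) : K) =
      MvPolynomial.eval (fun j => (p j : K)) (MvPolynomial.map (intRing v hna).subtype (H i)) :=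
    fun i => MvPolynomial.map_eval (intRing v hna).subtype p (H i)
  simp only [← hcoe] at hHp hc
  simpa only [MvPolynomial.map_eval, Function.comp_def] using
    exists_mk_eq_mul_of_coe_eq_mul hq hHp hc

/-- Let `K` be an algebraically closed field complete with respect to a non-trivial
non-archimedean absolute value, with residue field `k = O_K/m_K`. Let `h` be a
rational map of degree `d > 0` with minimal lift `H` (coefficients in `O_K`, maximal
coefficient absolute value `1`, nonzero resultant), let `p` represent `a ∈ P¹(K)`
with `‖p‖ = 1`, and suppose `‖H(p)‖ = 1`. Then the reduction modulo `m_K` of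
`h(a)` (which is represented by any `q` with `‖q‖ = 1` proportional over `K` to
`H(p)`) equals the point of `P¹(k)` represented by `(H̃₀(p̃), H̃₁(p̃))`. -/
theorem stmt_19 {K : Type*} [Field K] [IsAlgClosed K] (v : AbsoluteValue K ℝ)
    (hna : ∀ x y : K, v (x + y) ≤ max (v x) (v y))
    (hnt : ∃ x : K, x ≠ 0 ∧ v x ≠ 1)
    (hcomp : ∀ s : ℕ → K,
      (∀ ε : ℝ, 0 < ε → ∃ N, ∀ m ≥ N, ∀ n ≥ N, v (s m - s n) < ε) →
      ∃ L : K, ∀ ε : ℝ, 0 < ε → ∃ N, ∀ n ≥ N, v (s n - L) < ε)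
    (d : ℕ) (hd : 0 < d)
    (H : Fin 2 → MvPolynomial (Fin 2) (intRing v hna))
    (hhom : ∀ i, (MvPolynomial.map (intRing v hna).subtype (H i)).IsHomogeneous d)
    (hres : res2 d (MvPolynomial.map (intRing v hna).subtype (H 0))
        (MvPolynomial.map (intRing v hna).subtype (H 1)) ≠ 0)
    (hmin : ∃ (i : Fin 2) (n : Fin 2 →₀ ℕ), v (((H i).coeff n : intRing v hna) : K) = 1)
    (p : Fin 2 → intRing v hna)
    (hp : max (v (p 0 : K)) (v (p 1 : K)) = 1)
    (hHp : max
        (v (MvPolynomial.eval (fun j => (p j : K))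
          (MvPolynomial.map (intRing v hna).subtype (H 0))))
        (v (MvPolynomial.eval (fun j => (p j : K))
          (MvPolynomial.map (intRing v hna).subtype (H 1)))) = 1)
    (q : Fin 2 → intRing v hna)
    (hq : max (v (q 0 : K)) (v (q 1 : K)) = 1)
    (hrep : ∃ c : K, c ≠ 0 ∧ ∀ i, (q i : K) =
      c * MvPolynomial.eval (fun j => (p j : K))
        (MvPolynomial.map (intRing v hna).subtype (H i))) :
    ∃ c : (intRing v hna) ⧸ (maxIdeal v hna), c ≠ 0 ∧ ∀ i,
      Ideal.Quotient.mk (maxIdeal v hna) (q i) =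
        c * MvPolynomial.eval (fun j => Ideal.Quotient.mk (maxIdeal v hna) (p j))
          (MvPolynomial.map (Ideal.Quotient.mk (maxIdeal v hna)) (H i)) :=
  stmt_19_general v hna H p hHp q hq hrep
end
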